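/- arXiv:2212.03493 — 3 statements merged into one kernel-verified Lean document; each statement's English description precedes it below -/
import Mathlib

section
/- Let α > 0 and β ∈ ℝ. For every z ∈ ℂ, the series ∑_{k=0}^∞ z^k / Γ(αk + β) defining the Mittag-Leffler function E_{α,β}(z) converges absolutely; that is, the function k ↦ z^k / Γ(αk + β) is summable. -/
open Filter

/-- Auxiliary: ratio-test summability for `r^n / |Γ(a n + c)|` when `a ≥ 1`. -/
lemma mittagLeffler_aux (a c r : ℝ) (ha : 1 ≤ a) (hr : 0 ≤ r) :
    Summable (fun n : ℕ => r ^ n / |Real.Gamma (a * n + c)|) := by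
  apply summable_of_ratio_norm_eventually_le (r := 1 / 2) (by norm_num)
  have htends : Tendsto (fun n : ℕ => a * n + c) atTop atTop := by
    apply Filter.tendsto_atTop_add_const_right
    exact (tendsto_natCast_atTop_atTop).const_mul_atTop (lt_of_lt_of_le one_pos ha)
  filter_upwards [htends.eventually_ge_atTop 1, htends.eventually_ge_atTop (2 * r)]
    with n h1 h2
  set x : ℝ := a * n + c with hx
  have hx0 : 0 < x := lt_of_lt_of_le one_pos h1
  have hΓ : 0 < Real.Gamma x := Real.Gamma_pos_of_pos hx0
  have hxa0 : 0 < x + a := by linarith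
  have hΓa : 0 < Real.Gamma (x + a) := Real.Gamma_pos_of_pos hxa0
  have key : x * Real.Gamma x ≤ Real.Gamma (x + a) := by
    rw [← Real.Gamma_add_one hx0.ne']
    exact Real.Gamma_strictMonoOn_Ici.monotoneOn (by simp [Set.mem_Ici]; linarith)
      (by simp [Set.mem_Ici]; linarith) (by linarith)
  have harg : a * (n + 1 : ℕ) + c = x + a := by push_cast; ring
  rw [harg]
  simp only [Real.norm_eq_abs, abs_of_pos hΓ, abs_of_pos hΓa, abs_div, abs_pow,
    abs_of_nonneg hr]
  have h1' : r ^ (n + 1) / Real.Gamma (x + a) ≤ r ^ (n + 1) / (x * Real.Gamma x) :=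
    div_le_div_of_nonneg_left (by positivity) (by positivity) key
  refine h1'.trans ?_
  rw [pow_succ, mul_comm (r ^ n) r]
  rw [div_le_iff₀ (by positivity)] at *
  have : r * r ^ n ≤ (x / 2) * r ^ n := by
    apply mul_le_mul_of_nonneg_right _ (by positivity)
    linarith
  calc r * r ^ n ≤ (x / 2) * r ^ n := this
    _ = 1 / 2 * (r ^ n / Real.Gamma x) * (x * Real.Gamma x) := by
        field_simp

/-- The series defining the Mittag-Leffler function `E_{α,β}(z)` converges
absolutely for every `z ∈ ℂ`, when `α > 0` and `β ∈ ℝ`. -/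
theorem mittagLeffler_summable (α : ℝ) (hα : 0 < α) (β : ℝ) (z : ℂ) :
    Summable (fun k : ℕ => z ^ k / Complex.Gamma ((α * k + β : ℝ) : ℂ)) := by
  set q : ℕ := ⌈α⁻¹⌉₊ with hq
  have hqpos : 0 < q := Nat.ceil_pos.2 (by positivity)
  haveI : NeZero q := ⟨hqpos.ne'⟩
  have hqa : 1 ≤ α * q := by
    have := Nat.le_ceil α⁻¹
    calc (1 : ℝ) = α * α⁻¹ := by field_simp
      _ ≤ α * q := by apply mul_le_mul_of_nonneg_left this hα.le
  apply Summable.of_norm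
  have hnorm : ∀ k : ℕ, ‖z ^ k / Complex.Gamma ((α * k + β : ℝ) : ℂ)‖
      = ‖z‖ ^ k / |Real.Gamma (α * k + β)| := by
    intro k
    rw [Complex.Gamma_ofReal, norm_div, norm_pow, Complex.norm_real, Real.norm_eq_abs]
  rw [← Equiv.summable_iff (Nat.divModEquiv q).symm]
  apply (summable_prod_of_nonneg (fun _ => norm_nonneg _)).2
  constructor
  · intro n; exact Summable.of_finite
  · simp only [Function.comp, Nat.divModEquiv_symm_apply]
    apply Summable.congr _ (fun n => (tsum_fintype _).symm)
    apply summable_sum (s := (Finset.univ : Finset (Fin q)))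
    intro j _
    apply Summable.congr
      ((mittagLeffler_aux (α * q) (α * j + β) (‖z‖ ^ q) hqa (by positivity)).mul_left
        (‖z‖ ^ (j : ℕ)))
    intro n
    rw [hnorm (n * q + (j : ℕ))]
    have harg2 : α * ((n * q + (j : ℕ) : ℕ) : ℝ) + β = (α * q) * n + (α * (j : ℕ) + β) := by
      push_cast; ring
    have hpow : ‖z‖ ^ (n * q + (j : ℕ)) = ‖z‖ ^ (j : ℕ) * (‖z‖ ^ q) ^ n := by
      rw [← pow_mul, ← pow_add]; congr 1; ring
    rw [harg2, hpow, mul_div_assoc]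
end

section
/- Let α > 0 and μ > 0. Then for every t > 0, the function t ↦ E_{α,1}(−μ t^α) is differentiable at t and its derivative satisfies d/dt E_{α,1}(−μ t^α) = −μ t^{α−1} E_{α,α}(−μ t^α). -/
/-!
Since `Γ(αk + 1) ≥ ⌊αk⌋!` grows faster than any geometric sequence, the series
`E_{α,1}(x) = ∑ xᵏ / Γ(αk + 1)` has infinite radius of convergence and can be differentiated
termwise. The functional equation `Γ(s + 1) = s Γ(s)` turns the termwise derivative into
`E_{α,α}(x) / α`, and the chain rule through `τ ↦ -μ τ^α` gives the theorem.
-/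

/-- The real Mittag-Leffler function `E_{α,β}(x) = ∑ₖ xᵏ / Γ(αk + β)` (with the
convention that `1/Γ` vanishes at the poles of `Γ`, which holds for Mathlib's
`Real.Gamma` since it vanishes at nonpositive integers). -/
noncomputable def mittagLefflerReal (α β x : ℝ) : ℝ :=
  ∑' k : ℕ, x ^ k / Real.Gamma (α * k + β)

open Filter Set
open scoped Nat

lemma factorial_floor_le_Gamma_add_one {x : ℝ} (hx : 1 ≤ x) :
    (⌊x⌋₊ ! : ℝ) ≤ Real.Gamma (x + 1) := by
  have h1 : (1 : ℝ) ≤ ⌊x⌋₊ := by exact_mod_cast (Nat.one_le_floor_iff x).mpr hx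
  rw [← Real.Gamma_nat_eq_factorial]
  exact Real.Gamma_strictMonoOn_Ici.monotoneOn (mem_Ici.mpr (by linarith))
    (mem_Ici.mpr (by linarith)) (by linarith [Nat.floor_le (zero_le_one.trans hx)])

lemma eventually_pow_le_Gamma_mul_add_one {α : ℝ} (hα : 0 < α) (r : ℝ) :
    ∀ᶠ k : ℕ in atTop, r ^ k ≤ Real.Gamma (α * k + 1) := by
  set Q : ℝ := max 1 (|r| ^ α⁻¹)
  have hQ1 : 1 ≤ Q := le_max_left _ _
  have hrQ : |r| ≤ Q ^ α := by
    calc |r| = (|r| ^ α⁻¹) ^ α := (Real.rpow_inv_rpow (abs_nonneg r) hα.ne').symm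
      _ ≤ Q ^ α := Real.rpow_le_rpow (by positivity) (le_max_right _ _) hα.le
  have hfloor : Tendsto (fun k : ℕ => ⌊α * k⌋₊) atTop atTop :=
    tendsto_nat_floor_atTop.comp (tendsto_natCast_atTop_atTop.const_mul_atTop hα)
  filter_upwards [hfloor.eventually (FloorSemiring.eventually_mul_pow_lt_factorial_sub Q Q 0),
    hfloor.eventually_ge_atTop 1] with k hfact hk
  calc r ^ k ≤ |r| ^ k := (le_abs_self _).trans (abs_pow r k).le
    _ ≤ (Q ^ α) ^ k := pow_le_pow_left₀ (abs_nonneg r) hrQ k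
    _ = Q ^ (α * k) := by rw [← Real.rpow_natCast, ← Real.rpow_mul (by positivity)]
    _ ≤ Q ^ (⌊α * k⌋₊ + 1 : ℕ) := by
      rw [← Real.rpow_natCast]
      exact Real.rpow_le_rpow_of_exponent_le hQ1
        (by exact_mod_cast (Nat.lt_floor_add_one _).le)
    _ ≤ (⌊α * k⌋₊ ! : ℝ) := by rw [pow_succ']; simpa using hfact.le
    _ ≤ Real.Gamma (α * k + 1) :=
      factorial_floor_le_Gamma_add_one ((Nat.one_le_floor_iff _).mp hk)

lemma summable_pow_div_Gamma_mul_add_one {α : ℝ} (hα : 0 < α) (r : ℝ) :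
    Summable fun k : ℕ => r ^ k / Real.Gamma (α * k + 1) := by
  refine .of_norm_bounded_eventually_nat summable_geometric_two ?_
  filter_upwards [eventually_pow_le_Gamma_mul_add_one hα (2 * |r|)] with k hk
  have hΓ : 0 < Real.Gamma (α * k + 1) := Real.Gamma_pos_of_pos (by positivity)
  rw [norm_div, norm_pow, Real.norm_eq_abs, Real.norm_of_nonneg hΓ.le, div_le_iff₀ hΓ]
  calc |r| ^ k = (1 / 2) ^ k * (2 * |r|) ^ k := by rw [← mul_pow]; ring
    _ ≤ (1 / 2) ^ k * Real.Gamma (α * k + 1) := by gcongr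

lemma hasDerivAt_tsum_mul_pow {a : ℕ → ℝ} (ha : ∀ r, Summable fun k => a k * r ^ k)
    (x : ℝ) :
    HasDerivAt (fun y => ∑' k, a k * y ^ k) (∑' k : ℕ, (k + 1) * a (k + 1) * x ^ k) x := by
  set R := |x| + 1
  have hR : 1 ≤ R := by simp [R]
  have hx : x ∈ Ioo (-R) R := abs_lt.mp (by simp [R])
  have hderiv (k : ℕ) (y : ℝ) : HasDerivAt (fun y => a k * y ^ k) (a k * (k * y ^ (k - 1))) y :=
    (hasDerivAt_pow k y).const_mul (a k)
  have hbound (k : ℕ) (y : ℝ) (hy : y ∈ Ioo (-R) R) :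
      ‖a k * (k * y ^ (k - 1))‖ ≤ |a k| * (k * R ^ (k - 1)) := by
    rw [Real.norm_eq_abs, abs_mul, abs_mul, abs_pow, Nat.abs_cast]
    gcongr
    exact (abs_lt.mpr hy).le
  -- `k R^(k-1) ≤ (2R)^k`, and in `ℝ` summability is absolute summability.
  have hsum : Summable fun k : ℕ => |a k| * (k * R ^ (k - 1)) := by
    refine .of_nonneg_of_le (fun k => by positivity) (fun k => ?_)
      (summable_abs_iff.mpr (ha (2 * R)))
    rw [abs_mul, abs_pow, abs_of_pos (by positivity : (0 : ℝ) < 2 * R), mul_pow]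
    gcongr
    · exact_mod_cast Nat.lt_two_pow_self.le
    · exact Nat.sub_le k 1
  have h := hasDerivAt_tsum_of_isPreconnected hsum isOpen_Ioo isPreconnected_Ioo
    (fun k y _ => hderiv k y) hbound hx (ha x) hx
  refine h.congr_deriv ?_
  rw [(Summable.of_norm_bounded hsum fun k => hbound k x hx).tsum_eq_zero_add]
  simp only [CharP.cast_eq_zero, zero_mul, mul_zero, zero_add, Nat.cast_add, Nat.cast_one,
    Nat.add_sub_cancel]
  exact tsum_congr fun k => by ring

lemma hasDerivAt_mittagLefflerReal_one {α : ℝ} (hα : 0 < α) (x : ℝ) :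
    HasDerivAt (mittagLefflerReal α 1) (mittagLefflerReal α α x / α) x := by
  have hsum (r : ℝ) : Summable fun k : ℕ => (Real.Gamma (α * k + 1))⁻¹ * r ^ k := by
    simpa only [div_eq_inv_mul] using summable_pow_div_Gamma_mul_add_one hα r
  convert hasDerivAt_tsum_mul_pow hsum x using 1
  · funext y
    simp only [mittagLefflerReal, div_eq_inv_mul]
  · rw [mittagLefflerReal, ← tsum_div_const]
    refine tsum_congr fun k => ?_
    have hk : 0 < α * k + α := by positivity
    rw [Nat.cast_add_one, show α * (k + 1) + 1 = (α * k + α) + 1 by ring,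
      Real.Gamma_add_one hk.ne']
    have := (Real.Gamma_pos_of_pos hk).ne'
    field_simp

theorem mittagLeffler_hasDerivAt_general (α μ : ℝ) (hα : 0 < α) (t : ℝ) (ht : 0 < t) :
    HasDerivAt (fun τ : ℝ => mittagLefflerReal α 1 (-μ * τ ^ α))
      (-μ * t ^ (α - 1) * mittagLefflerReal α α (-μ * t ^ α)) t := by
  have hinner : HasDerivAt (fun τ : ℝ => -μ * τ ^ α) (-μ * (α * t ^ (α - 1))) t :=
    (Real.hasDerivAt_rpow_const (Or.inl ht.ne')).const_mul (-μ)
  refine ((hasDerivAt_mittagLefflerReal_one hα (-μ * t ^ α)).comp t hinner).congr_deriv ?_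
  field_simp

/-- For `α > 0`, `μ > 0` and `t > 0`, the function `t ↦ E_{α,1}(−μ tᵅ)` is
differentiable at `t` with derivative `−μ t^{α−1} E_{α,α}(−μ tᵅ)`. -/
theorem mittagLeffler_hasDerivAt (α μ : ℝ) (hα : 0 < α) (hμ : 0 < μ)
    (t : ℝ) (ht : 0 < t) :
    HasDerivAt (fun τ : ℝ => mittagLefflerReal α 1 (-μ * τ ^ α))
      (-μ * t ^ (α - 1) * mittagLefflerReal α α (-μ * t ^ α)) t :=
  mittagLeffler_hasDerivAt_general α μ hα t ht
end

section
/- Let ξ ∈ ℝ with ξ ≠ 0, let Δt > 0, T > 0, and let g : [0, T] → ℝ be continuous. Define Y(t) = ∫₀^t e^{ξ(t − τ)} g(τ) dτ and let t_i = i Δt with t_i ≤ T for some integer i ≥ 1. If g is affine on the interval [t_{i−1}, t_i], i.e. g(τ) = ((t_i − τ) g(t_{i−1}) + (τ − t_{i−1}) g(t_i)) / Δt there, then Y(t_i) = κ₁ Y(t_{i−1}) + κ₂ g(t_{i−1}) + κ₃ g(t_i), where z = ξ Δt, κ₁ = e^z, κ₂ = (1/ξ)(e^z − 1 − (e^z −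 z − 1)/z) and κ₃ = (1/ξ)(e^z − z − 1)/z. -/
/-!
Splitting `∫₀^{tᵢ}` at `tᵢ₋₁` and pulling `e^{ξΔt}` out of the first piece gives
`Y(tᵢ) = e^{ξΔt} Y(tᵢ₋₁) + ∫_{tᵢ₋₁}^{tᵢ} e^{ξ(tᵢ−τ)} g(τ) dτ`. On the last step `g` is affine,
so the remaining integral is a combination of the moments `∫ₐᵇ e^{ξ(b−τ)}` and
`∫ₐᵇ e^{ξ(b−τ)} (τ − a)`, both computed from explicit antiderivatives.
-/

open Real intervalIntegral
open MeasureTheory (volume)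

theorem integral_exp_mul_sub_mul_split {ξ c a b : ℝ} {g : ℝ → ℝ}
    (hca : IntervalIntegrable g volume c a) (hab : IntervalIntegrable g volume a b) :
    ∫ τ in c..b, exp (ξ * (b - τ)) * g τ =
      exp (ξ * (b - a)) * (∫ τ in c..a, exp (ξ * (a - τ)) * g τ) +
        ∫ τ in a..b, exp (ξ * (b - τ)) * g τ := by
  have hexp : ContinuousOn (fun τ => exp (ξ * (b - τ))) (Set.uIcc a b ∪ Set.uIcc c a) :=
    (by fun_prop : Continuous _).continuousOn
  rw [← integral_add_adjacent_intervals (hca.continuousOn_mul (hexp.mono Set.subset_union_right))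
    (hab.continuousOn_mul (hexp.mono Set.subset_union_left)), ← integral_const_mul]
  congr 1
  refine integral_congr fun τ _ => ?_
  rw [← mul_assoc, ← exp_add]
  ring_nf

theorem integral_exp_mul_sub {ξ : ℝ} (hξ : ξ ≠ 0) (a b : ℝ) :
    ∫ τ in a..b, exp (ξ * (b - τ)) = (exp (ξ * (b - a)) - 1) / ξ := by
  have hF : ∀ τ ∈ Set.uIcc a b,
      HasDerivAt (fun τ => -exp (ξ * (b - τ)) / ξ) (exp (ξ * (b - τ))) τ := fun τ _ => by
    refine ((((hasDerivAt_id τ).const_sub b).const_mul ξ).exp.neg.div_const ξ).congr_deriv ?_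
    simp only [id]
    field_simp
  rw [integral_eq_sub_of_hasDerivAt hF ((by fun_prop : Continuous _).intervalIntegrable _ _)]
  simp only [sub_self, mul_zero, exp_zero]
  ring

theorem integral_exp_mul_sub_mul_sub {ξ : ℝ} (hξ : ξ ≠ 0) (a b : ℝ) :
    ∫ τ in a..b, exp (ξ * (b - τ)) * (τ - a) =
      (exp (ξ * (b - a)) - ξ * (b - a) - 1) / ξ ^ 2 := by
  have hF : ∀ τ ∈ Set.uIcc a b,
      HasDerivAt (fun τ => -exp (ξ * (b - τ)) * (ξ * (τ - a) + 1) / ξ ^ 2)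
      (exp (ξ * (b - τ)) * (τ - a)) τ := fun τ _ => by
    refine (((((hasDerivAt_id τ).const_sub b).const_mul ξ).exp.neg.mul
      ((((hasDerivAt_id τ).sub_const a).const_mul ξ).add_const 1)).div_const (ξ ^ 2)).congr_deriv ?_
    simp only [id, Pi.neg_apply]
    field_simp
    ring
  rw [integral_eq_sub_of_hasDerivAt hF ((by fun_prop : Continuous _).intervalIntegrable _ _)]
  simp only [sub_self, mul_zero, exp_zero]
  field_simp
  ring

theorem integral_exp_mul_affine {ξ h : ℝ} (hξ : ξ ≠ 0) (hh : h ≠ 0) (a p q : ℝ) :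
    ∫ τ in a..a + h, exp (ξ * (a + h - τ)) * (((a + h - τ) * p + (τ - a) * q) / h) =
      (1 / ξ) * (exp (ξ * h) - 1 - (exp (ξ * h) - ξ * h - 1) / (ξ * h)) * p +
        (1 / ξ) * ((exp (ξ * h) - ξ * h - 1) / (ξ * h)) * q := by
  have hsplit : ∀ τ, exp (ξ * (a + h - τ)) * (((a + h - τ) * p + (τ - a) * q) / h) =
      p * exp (ξ * (a + h - τ)) + (q - p) / h * (exp (ξ * (a + h - τ)) * (τ - a)) := by
    intro τ
    field_simp
    ring
  simp_rw [hsplit]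
  rw [integral_add ((by fun_prop : Continuous _).intervalIntegrable _ _)
      ((by fun_prop : Continuous _).intervalIntegrable _ _),
    integral_const_mul, integral_const_mul, integral_exp_mul_sub hξ,
    integral_exp_mul_sub_mul_sub hξ, add_sub_cancel_left]
  field_simp
  ring

theorem fast_L1_history_recurrence_general (ξ : ℝ) (hξ : ξ ≠ 0) (Δt T : ℝ)
    (hΔt : 0 < Δt)
    (g : ℝ → ℝ) (hg : ContinuousOn g (Set.Icc 0 T))
    (Y : ℝ → ℝ)
    (hY : ∀ t : ℝ, Y t = ∫ τ in (0:ℝ)..t, Real.exp (ξ * (t - τ)) * g τ)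
    (i : ℕ) (hi : 1 ≤ i) (hti : (i : ℝ) * Δt ≤ T)
    (haff : ∀ τ ∈ Set.Icc (((i : ℝ) - 1) * Δt) ((i : ℝ) * Δt),
      g τ = (((i : ℝ) * Δt - τ) * g (((i : ℝ) - 1) * Δt) +
        (τ - ((i : ℝ) - 1) * Δt) * g ((i : ℝ) * Δt)) / Δt)
    (z κ₁ κ₂ κ₃ : ℝ) (hz : z = ξ * Δt) (hκ₁ : κ₁ = Real.exp z)
    (hκ₂ : κ₂ = (1 / ξ) * (Real.exp z - 1 - (Real.exp z - z - 1) / z))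
    (hκ₃ : κ₃ = (1 / ξ) * ((Real.exp z - z - 1) / z)) :
    Y ((i : ℝ) * Δt) =
      κ₁ * Y (((i : ℝ) - 1) * Δt) + κ₂ * g (((i : ℝ) - 1) * Δt) +
        κ₃ * g ((i : ℝ) * Δt) := by
  have hb : (i : ℝ) * Δt = ((i : ℝ) - 1) * Δt + Δt := by ring
  have ha : 0 ≤ ((i : ℝ) - 1) * Δt :=
    mul_nonneg (sub_nonneg.mpr (Nat.one_le_cast.mpr hi)) hΔt.le
  rw [hb] at hti haff ⊢
  set a := ((i : ℝ) - 1) * Δt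
  have hint : ∀ c d, 0 ≤ c → c ≤ d → d ≤ T → IntervalIntegrable g volume c d :=
    fun c d h0c hcd hdT =>
    (hg.mono (by rw [Set.uIcc_of_le hcd]; exact Set.Icc_subset_Icc h0c hdT)).intervalIntegrable
  have hlast : ∫ τ in a..a + Δt, exp (ξ * (a + Δt - τ)) * g τ =
      κ₂ * g a + κ₃ * g (a + Δt) := by
    rw [integral_congr fun τ hτ => by
        rw [haff τ (Set.uIcc_of_le (by linarith : a ≤ a + Δt) ▸ hτ)],
      integral_exp_mul_affine hξ hΔt.ne', hκ₂, hκ₃, hz]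
  rw [hY, hY, integral_exp_mul_sub_mul_split (hint 0 a le_rfl ha (by linarith))
    (hint a (a + Δt) ha (by linarith) hti), hlast, add_sub_cancel_left, hκ₁, hz, add_assoc]

/-- One-step exact recurrence for the history term of the fast L1 scheme:
if `Y(t) = ∫₀ᵗ e^{ξ(t−τ)} g(τ) dτ`, `tᵢ = iΔt ≤ T` with `i ≥ 1`, and `g` is
affine on `[tᵢ₋₁, tᵢ]`, then `Y(tᵢ) = κ₁ Y(tᵢ₋₁) + κ₂ g(tᵢ₋₁) + κ₃ g(tᵢ)`,
where `z = ξΔt`, `κ₁ = eᶻ`, `κ₂ = (1/ξ)(eᶻ − 1 − (eᶻ − z − 1)/z)` and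
`κ₃ = (1/ξ)(eᶻ − z − 1)/z`. -/
theorem fast_L1_history_recurrence (ξ : ℝ) (hξ : ξ ≠ 0) (Δt T : ℝ)
    (hΔt : 0 < Δt) (hT : 0 < T)
    (g : ℝ → ℝ) (hg : ContinuousOn g (Set.Icc 0 T))
    (Y : ℝ → ℝ)
    (hY : ∀ t : ℝ, Y t = ∫ τ in (0:ℝ)..t, Real.exp (ξ * (t - τ)) * g τ)
    (i : ℕ) (hi : 1 ≤ i) (hti : (i : ℝ) * Δt ≤ T)
    (haff : ∀ τ ∈ Set.Icc (((i : ℝ) - 1) * Δt) ((i : ℝ) * Δt),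
      g τ = (((i : ℝ) * Δt - τ) * g (((i : ℝ) - 1) * Δt) +
        (τ - ((i : ℝ) - 1) * Δt) * g ((i : ℝ) * Δt)) / Δt)
    (z κ₁ κ₂ κ₃ : ℝ) (hz : z = ξ * Δt) (hκ₁ : κ₁ = Real.exp z)
    (hκ₂ : κ₂ = (1 / ξ) * (Real.exp z - 1 - (Real.exp z - z - 1) / z))
    (hκ₃ : κ₃ = (1 / ξ) * ((Real.exp z - z - 1) / z)) :
    Y ((i : ℝ) * Δt) =
      κ₁ * Y (((i : ℝ) - 1) * Δt) + κ₂ * g (((i : ℝ) - 1) * Δt) +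
        κ₃ * g ((i : ℝ) * Δt) :=
  fast_L1_history_recurrence_general ξ hξ Δt T hΔt g hg Y hY i hi hti haff z κ₁ κ₂ κ₃ hz hκ₁ hκ₂ hκ₃
end
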